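/- arXiv:2010.03381 — 7 statements merged into one kernel-verified Lean document; each statement's English description precedes it below -/
import Mathlib

section
/- Let B be a unital associative ℂ-algebra containing elements e₁, e₂, e₃ and families (L_{ij})_{i,j∈{1,2,3}}, (C_{ij})_{i,j∈{1,2,3}} such that: e_k² = 1 for each k and e_j e_k = −e_k e_j for j ≠ k; C_{ij} = C_{ji} for all i, j; L_{ij} = −L_{ji} for all i, j (so L_{ii} = 0); every L_{ij} and every C_{ij} commutes with every e_k; and for all i, j, k, l ∈ {1,2,3}: [L_{ij}, L_{kl}] = L_{il}C_{jk} + L_{jk}C_{il} + L_{ki}C_{lj} + L_{lj}C_{ki} = C_{jk}L_{il} + C_{il}L_{jk} + C_{lj}L_{ki} + C_{ki}L_{lj}; {L_{ij}, L_{kl}} + {L_{ki}, L_{jl}} + {L_{jk}, L_{il}} = 0; [L_{ij}, C_{kl}] + [L_{ki}, C_{jl}] + [L_{jk}, C_{il}] = 0; and L_{ij}L_{kl} + L_{ki}L_{jl} + L_{jk}L_{il} = L_{ij}C_{kl} + L_{ki}C_{jl} + L_{jk}C_{il}. Define O_i := (1/2)(e₁C_{1i} + e₂C_{2i} + e₃C_{3i}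 − e_i), O_{ij} := L_{ij} + (1/2)e_i e_j + O_i e_j − O_j e_i, and O_{123} := −(1/2)e₁e₂e₃ − O₁e₂e₃ − O₂e₃e₁ − O₃e₁e₂ + O_{12}e₃ + O_{31}e₂ + O_{23}e₁. Then O_{123}² = −1/4 + O₁² + O₂² + O₃² + O_{12}² + O_{31}² + O_{23}². -/
namespace Stmt0

variable {B : Type*} [Ring B] [Algebra ℂ B]

/-- The one-index symmetries `O_i = (1/2)(e₁C_{1i} + e₂C_{2i} + e₃C_{3i} − e_i)`. -/
noncomputable def O (e : Fin 3 → B) (C : Fin 3 → Fin 3 → B) (i : Fin 3) : B :=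
  (1 / 2 : ℂ) • (e 0 * C 0 i + e 1 * C 1 i + e 2 * C 2 i - e i)

/-- The two-index symmetries `O_{ij} = L_{ij} + (1/2)e_i e_j + O_i e_j − O_j e_i`. -/
noncomputable def Oij (e : Fin 3 → B) (L C : Fin 3 → Fin 3 → B) (i j : Fin 3) : B :=
  L i j + (1 / 2 : ℂ) • (e i * e j) + O e C i * e j - O e C j * e i

/-- The three-index symmetry
`O_{123} = −(1/2)e₁e₂e₃ − O₁e₂e₃ − O₂e₃e₁ − O₃e₁e₂ + O_{12}e₃ + O_{31}e₂ + O_{23}e₁`. -/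
noncomputable def O123 (e : Fin 3 → B) (L C : Fin 3 → Fin 3 → B) : B :=
  -((1 / 2 : ℂ) • (e 0 * e 1 * e 2)) - O e C 0 * (e 1 * e 2) - O e C 1 * (e 2 * e 0)
    - O e C 2 * (e 0 * e 1) + Oij e L C 0 1 * e 2 + Oij e L C 2 0 * e 1 + Oij e L C 1 2 * e 0

set_option maxHeartbeats 4000000 in
theorem square_of_O123
    (e : Fin 3 → B) (L C : Fin 3 → Fin 3 → B)
    (he2 : ∀ k, e k * e k = 1)
    (heanti : ∀ j k, j ≠ k → e j * e k = -(e k * e j))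
    (hCsymm : ∀ i j, C i j = C j i)
    (hLanti : ∀ i j, L i j = -(L j i))
    (hLe : ∀ i j k, L i j * e k = e k * L i j)
    (hCe : ∀ i j k, C i j * e k = e k * C i j)
    (hLL : ∀ i j k l, L i j * L k l - L k l * L i j
        = L i l * C j k + L j k * C i l + L k i * C l j + L l j * C k i)
    (hLL' : ∀ i j k l, L i j * L k l - L k l * L i j
        = C j k * L i l + C i l * L j k + C l j * L k i + C k i * L l j)
    (hacomm : ∀ i j k l, (L i j * L k l + L k l * L i j) + (L k i * L j l + L j l * L k i)
        + (L j k * L i l + L i l * L j k) = 0)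
    (hLC : ∀ i j k l, (L i j * C k l - C k l * L i j) + (L k i * C j l - C j l * L k i)
        + (L j k * C i l - C i l * L j k) = 0)
    (hsum : ∀ i j k l, L i j * L k l + L k i * L j l + L j k * L i l
        = L i j * C k l + L k i * C j l + L j k * C i l) :
    O123 e L C * O123 e L C =
      -((1 / 4 : ℂ) • (1 : B)) + O e C 0 * O e C 0 + O e C 1 * O e C 1 + O e C 2 * O e C 2
        + Oij e L C 0 1 * Oij e L C 0 1 + Oij e L C 2 0 * Oij e L C 2 0
        + Oij e L C 1 2 * Oij e L C 1 2 := by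
  -- L is zero on the diagonal
  have hL0 : ∀ i, L i i = 0 := by
    intro i
    have h := hLanti i i
    have h2 : (2 : ℂ) • L i i = 0 := by
      rw [two_smul]; nth_rewrite 2 [h]; exact add_neg_cancel _
    have h3 : ((2 : ℂ)⁻¹ * 2) • L i i = 0 := by rw [mul_smul, h2, smul_zero]
    rw [show ((2 : ℂ)⁻¹ * 2) = 1 by norm_num, one_smul] at h3
    exact h3
  -- the three key relations (defects in each bivector sector)
  have key01 : (L 0 2 * L 1 2 - L 1 2 * L 0 2) + (L 0 2 * L 1 2 - L 1 2 * L 0 2)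
      + (L 0 1 * C 2 2 + C 2 2 * L 0 1) + (L 1 2 * C 0 2 + C 0 2 * L 1 2)
      - (L 0 2 * C 1 2 + C 1 2 * L 0 2) = (0 : B) := by
    have h1 := hLL 0 2 1 2
    have h2 := hLL' 0 2 1 2
    rw [hCsymm 2 1, hLanti 2 1, hLanti 1 0, hL0 2, hCsymm 1 0] at h1 h2
    have d1 := sub_eq_zero.mpr h1
    have d2 := sub_eq_zero.mpr h2
    calc (L 0 2 * L 1 2 - L 1 2 * L 0 2) + (L 0 2 * L 1 2 - L 1 2 * L 0 2)
        + (L 0 1 * C 2 2 + C 2 2 * L 0 1) + (L 1 2 * C 0 2 + C 0 2 * L 1 2)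
        - (L 0 2 * C 1 2 + C 1 2 * L 0 2)
        = (L 0 2 * L 1 2 - L 1 2 * L 0 2
            - (L 0 2 * C 1 2 + -L 1 2 * C 0 2 + -L 0 1 * C 2 2 + 0 * C 0 1))
          + (L 0 2 * L 1 2 - L 1 2 * L 0 2
            - (C 1 2 * L 0 2 + C 0 2 * -L 1 2 + C 2 2 * -L 0 1 + C 0 1 * 0)) := by
          noncomm_ring
      _ = 0 := by rw [d1, d2, add_zero]
  have key02 : (L 1 2 * L 0 1 - L 0 1 * L 1 2) + (L 1 2 * L 0 1 - L 0 1 * L 1 2)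
      + (L 0 2 * C 1 1 + C 1 1 * L 0 2) - (L 0 1 * C 1 2 + C 1 2 * L 0 1)
      - (L 1 2 * C 0 1 + C 0 1 * L 1 2) = (0 : B) := by
    have h1 := hLL 0 1 1 2
    have h2 := hLL' 0 1 1 2
    rw [hL0 1, hLanti 1 0, hCsymm 2 1, hLanti 2 1, hCsymm 1 0] at h1 h2
    have d1 := sub_eq_zero.mpr h1
    have d2 := sub_eq_zero.mpr h2
    calc (L 1 2 * L 0 1 - L 0 1 * L 1 2) + (L 1 2 * L 0 1 - L 0 1 * L 1 2)
        + (L 0 2 * C 1 1 + C 1 1 * L 0 2) - (L 0 1 * C 1 2 + C 1 2 * L 0 1)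
        - (L 1 2 * C 0 1 + C 0 1 * L 1 2)
        = -((L 0 1 * L 1 2 - L 1 2 * L 0 1
            - (L 0 2 * C 1 1 + 0 * C 0 2 + -L 0 1 * C 1 2 + -L 1 2 * C 0 1))
          + (L 0 1 * L 1 2 - L 1 2 * L 0 1
            - (C 1 1 * L 0 2 + C 0 2 * 0 + C 1 2 * -L 0 1 + C 0 1 * -L 1 2))) := by
          noncomm_ring
      _ = 0 := by rw [d1, d2, add_zero, neg_zero]
  have key12 : (L 0 1 * L 0 2 - L 0 2 * L 0 1) + (L 0 1 * L 0 2 - L 0 2 * L 0 1)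
      + (L 1 2 * C 0 0 + C 0 0 * L 1 2) + (L 0 1 * C 0 2 + C 0 2 * L 0 1)
      - (L 0 2 * C 0 1 + C 0 1 * L 0 2) = (0 : B) := by
    have h1 := hLL 0 1 0 2
    have h2 := hLL' 0 1 0 2
    rw [hCsymm 1 0, hLanti 1 0, hL0 0, hCsymm 2 1, hLanti 2 1] at h1 h2
    have d1 := sub_eq_zero.mpr h1
    have d2 := sub_eq_zero.mpr h2
    calc (L 0 1 * L 0 2 - L 0 2 * L 0 1) + (L 0 1 * L 0 2 - L 0 2 * L 0 1)
        + (L 1 2 * C 0 0 + C 0 0 * L 1 2) + (L 0 1 * C 0 2 + C 0 2 * L 0 1)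
        - (L 0 2 * C 0 1 + C 0 1 * L 0 2)
        = (L 0 1 * L 0 2 - L 0 2 * L 0 1
            - (L 0 2 * C 0 1 + -L 0 1 * C 0 2 + 0 * C 1 2 + -L 1 2 * C 0 0))
          + (L 0 1 * L 0 2 - L 0 2 * L 0 1
            - (C 0 1 * L 0 2 + C 0 2 * -L 0 1 + C 1 2 * 0 + C 0 0 * -L 1 2)) := by
          noncomm_ring
      _ = 0 := by rw [d1, d2, add_zero]
  -- normalization helpers
  have h10 : e 1 * e 0 = -(e 0 * e 1) := heanti 1 0 (by decide)
  have h20 : e 2 * e 0 = -(e 0 * e 2) := heanti 2 0 (by decide)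
  have h21 : e 2 * e 1 = -(e 1 * e 2) := heanti 2 1 (by decide)
  have h10' : ∀ x : B, e 1 * (e 0 * x) = -(e 0 * (e 1 * x)) := fun x => by
    rw [← mul_assoc, h10, neg_mul, mul_assoc]
  have h20' : ∀ x : B, e 2 * (e 0 * x) = -(e 0 * (e 2 * x)) := fun x => by
    rw [← mul_assoc, h20, neg_mul, mul_assoc]
  have h21' : ∀ x : B, e 2 * (e 1 * x) = -(e 1 * (e 2 * x)) := fun x => by
    rw [← mul_assoc, h21, neg_mul, mul_assoc]
  have hsq : ∀ k (x : B), e k * (e k * x) = x := fun k x => by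
    rw [← mul_assoc, he2, one_mul]
  have hLe' : ∀ i j k, e k * L i j = L i j * e k := fun i j k => (hLe i j k).symm
  have hCe' : ∀ i j k, e k * C i j = C i j * e k := fun i j k => (hCe i j k).symm
  have hLe2 : ∀ i j k (x : B), e k * (L i j * x) = L i j * (e k * x) := fun i j k x => by
    rw [← mul_assoc, ← hLe, mul_assoc]
  have hCe2 : ∀ i j k (x : B), e k * (C i j * x) = C i j * (e k * x) := fun i j k x => by
    rw [← mul_assoc, ← hCe, mul_assoc]
  -- the master identity: O123² equals the target plus the defect terms
  have main : O123 e L C * O123 e L C =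
      (-((1 / 4 : ℂ) • (1 : B)) + O e C 0 * O e C 0 + O e C 1 * O e C 1 + O e C 2 * O e C 2
        + Oij e L C 0 1 * Oij e L C 0 1 + Oij e L C 2 0 * Oij e L C 2 0
        + Oij e L C 1 2 * Oij e L C 1 2)
      + (1 / 2 : ℂ) • (((L 0 2 * L 1 2 - L 1 2 * L 0 2) + (L 0 2 * L 1 2 - L 1 2 * L 0 2)
          + (L 0 1 * C 2 2 + C 2 2 * L 0 1) + (L 1 2 * C 0 2 + C 0 2 * L 1 2)
          - (L 0 2 * C 1 2 + C 1 2 * L 0 2)) * (e 0 * e 1))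
      + (1 / 2 : ℂ) • (((L 1 2 * L 0 1 - L 0 1 * L 1 2) + (L 1 2 * L 0 1 - L 0 1 * L 1 2)
          + (L 0 2 * C 1 1 + C 1 1 * L 0 2) - (L 0 1 * C 1 2 + C 1 2 * L 0 1)
          - (L 1 2 * C 0 1 + C 0 1 * L 1 2)) * (e 0 * e 2))
      + (1 / 2 : ℂ) • (((L 0 1 * L 0 2 - L 0 2 * L 0 1) + (L 0 1 * L 0 2 - L 0 2 * L 0 1)
          + (L 1 2 * C 0 0 + C 0 0 * L 1 2) + (L 0 1 * C 0 2 + C 0 2 * L 0 1)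
          - (L 0 2 * C 0 1 + C 0 1 * L 0 2)) * (e 1 * e 2)) := by
    simp only [O123, Oij, O]
    simp only [hCsymm 1 0, hCsymm 2 0, hCsymm 2 1, hLanti 2 0]
    simp only [mul_add, add_mul, mul_sub, sub_mul, neg_mul, mul_neg, neg_neg,
      smul_mul_assoc, mul_smul_comm, smul_smul, mul_assoc, one_mul, mul_one, smul_neg,
      hLe', hCe', hLe2, hCe2, h10, h20, h21, h10', h20', h21', he2, hsq]
    module
  rw [main, key01, key02, key12]
  simp
end Stmt0
end

section
/- Let B be a unital associative ℂ-algebra containing elements O₁, O₂, O₃, O₁₂, O₃₁, O₂₃, O₁₂₃ satisfying [O₁₂, O₃₁] = O₂₃ + {O₁₂₃, O₁} + [O₂, O₃], [O₂₃, O₁₂] = O₃₁ + {O₁₂₃, O₂} + [O₃, O₁], and [O₃₁, O₂₃] = O₁₂ + {O₁₂₃, O₃} + [O₁, O₂]. Define O₀ := −i·O₁₂, O₊ := i·O₃₁ + O₂₃, O₋ := i·O₃₁ − O₂₃, T₀ := i·O₃, T₊ := O₁ + i·O₂, T₋ := O₁ − i·O₂. Then [O₀, O₊] = O₊ + {O₁₂₃,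 T₊} + [T₀, T₊], [O₀, O₋] = −O₋ + {O₁₂₃, T₋} − [T₀, T₋], and [O₊, O₋] = 2O₀ − 2{O₁₂₃, T₀} + [T₊, T₋]. -/
/-- Proposition 3.7 of the paper, stated abstractly: the commutation relations for
`O₀ = −i O₁₂`, `O₊ = i O₃₁ + O₂₃`, `O₋ = i O₃₁ − O₂₃` in terms of
`T₀ = i O₃`, `T₊ = O₁ + i O₂`, `T₋ = O₁ − i O₂`, given the commutation rules
of the two-index symmetries. -/
theorem commutation_O0_Oplus_Ominus
    {B : Type*} [Ring B] [Algebra ℂ B]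
    (O₁ O₂ O₃ O₁₂ O₃₁ O₂₃ O₁₂₃ : B)
    (h1 : O₁₂ * O₃₁ - O₃₁ * O₁₂
        = O₂₃ + (O₁₂₃ * O₁ + O₁ * O₁₂₃) + (O₂ * O₃ - O₃ * O₂))
    (h2 : O₂₃ * O₁₂ - O₁₂ * O₂₃
        = O₃₁ + (O₁₂₃ * O₂ + O₂ * O₁₂₃) + (O₃ * O₁ - O₁ * O₃))
    (h3 : O₃₁ * O₂₃ - O₂₃ * O₃₁
        = O₁₂ + (O₁₂₃ * O₃ + O₃ * O₁₂₃) + (O₁ * O₂ - O₂ * O₁)) :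
    let O₀ := -(Complex.I • O₁₂)
    let Op := Complex.I • O₃₁ + O₂₃
    let Om := Complex.I • O₃₁ - O₂₃
    let T₀ := Complex.I • O₃
    let Tp := O₁ + Complex.I • O₂
    let Tm := O₁ - Complex.I • O₂
    (O₀ * Op - Op * O₀ = Op + (O₁₂₃ * Tp + Tp * O₁₂₃) + (T₀ * Tp - Tp * T₀)) ∧
    (O₀ * Om - Om * O₀ = -Om + (O₁₂₃ * Tm + Tm * O₁₂₃) - (T₀ * Tm - Tm * T₀)) ∧
    (Op * Om - Om * Op = (2 : ℂ) • O₀ - (2 : ℂ) • (O₁₂₃ * T₀ + T₀ * O₁₂₃)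
      + (Tp * Tm - Tm * Tp)) := by
  intro O₀ Op Om T₀ Tp Tm
  refine ⟨?_, ?_, ?_⟩
  · have e : O₀ * Op - Op * O₀
        = (O₁₂ * O₃₁ - O₃₁ * O₁₂) + Complex.I • (O₂₃ * O₁₂ - O₁₂ * O₂₃) := by
      simp only [O₀, Op, mul_add, add_mul, neg_mul, mul_neg, smul_mul_assoc,
        mul_smul_comm, smul_smul, Complex.I_mul_I, neg_smul, one_smul,
        smul_add, smul_sub, neg_neg]
      match_scalars <;> (ring_nf; try simp [Complex.I_sq])
    rw [e, h1, h2]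
    simp only [Op, T₀, Tp, mul_add, add_mul, smul_mul_assoc, mul_smul_comm,
      smul_smul, Complex.I_mul_I, neg_smul, one_smul, smul_add, smul_sub]
    match_scalars <;> (ring_nf; try simp [Complex.I_sq])
  · have e : O₀ * Om - Om * O₀
        = (O₁₂ * O₃₁ - O₃₁ * O₁₂) - Complex.I • (O₂₃ * O₁₂ - O₁₂ * O₂₃) := by
      simp only [O₀, Om, mul_sub, sub_mul, mul_add, add_mul, neg_mul, mul_neg,
        smul_mul_assoc, mul_smul_comm, smul_smul, Complex.I_mul_I, neg_smul,
        one_smul, smul_add, smul_sub, neg_neg]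
      match_scalars <;> (ring_nf; try simp [Complex.I_sq])
    rw [e, h1, h2]
    simp only [Om, T₀, Tm, mul_sub, sub_mul, mul_add, add_mul, smul_mul_assoc,
      mul_smul_comm, smul_smul, Complex.I_mul_I, neg_smul, one_smul, smul_add,
      smul_sub, neg_neg]
    match_scalars <;> (ring_nf; try simp [Complex.I_sq])
  · have e : Op * Om - Om * Op
        = ((-2 : ℂ) * Complex.I) • (O₃₁ * O₂₃ - O₂₃ * O₃₁) := by
      simp only [Op, Om, mul_sub, sub_mul, mul_add, add_mul, smul_mul_assoc,
        mul_smul_comm, smul_smul, Complex.I_mul_I, neg_smul, one_smul,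
        smul_add, smul_sub, neg_neg, neg_mul, mul_neg, mul_one]
      match_scalars <;> (ring_nf; try simp [Complex.I_sq])
    rw [e, h3]
    simp only [O₀, T₀, Tp, Tm, mul_sub, sub_mul, mul_add, add_mul,
      smul_mul_assoc, mul_smul_comm, smul_smul, Complex.I_mul_I, neg_smul,
      one_smul, smul_add, smul_sub, neg_neg, neg_mul, mul_neg, mul_one,
      smul_neg]
    match_scalars <;> (ring_nf; try simp [Complex.I_sq])
end

section
/- Let B be a unital associative ℂ-algebra containing elements O₁, O₂, O₃, O₁₂, O₃₁, O₂₃, O₁₂₃ satisfying: [O₁₂, O₃₁] = O₂₃ + {O₁₂₃, O₁} + [O₂, O₃], [O₂₃, O₁₂] = O₃₁ + {O₁₂₃, O₂} + [O₃, O₁], [O₃₁, O₂₃] = O₁₂ + {O₁₂₃, O₃} + [O₁, O₂]; O₁₂₃ commutes with each of O₁, O₂, O₃, O₁₂, O₃₁, O₂₃; and O₁₂₃² = −1/4 + O₁² + O₂² + O₃² + O₁₂² + O₃₁² + O₂₃². Define O₀ := −i·O₁₂, O₊ := i·O₃₁ + O₂₃, O₋ := i·O₃₁ − O₂₃, T₀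 := i·O₃, T₊ := O₁ + i·O₂, T₋ := O₁ − i·O₂. Then O₊O₋ = T₊T₋ − (O₀ − 1/2)² − (O₁₂₃ + T₀)² and O₋O₊ = T₋T₊ − (O₀ + 1/2)² − (O₁₂₃ − T₀)². -/
/-- Corollary 3.8 of the paper, stated abstractly: the factorized expressions for the
products `O₊O₋` and `O₋O₊`, given the commutation rules of the two-index symmetries,
centrality of `O₁₂₃`, and the formula for `O₁₂₃²`. -/
theorem OpOm_factorization
    {B : Type*} [Ring B] [Algebra ℂ B]
    (O₁ O₂ O₃ O₁₂ O₃₁ O₂₃ O₁₂₃ : B)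
    (h1 : O₁₂ * O₃₁ - O₃₁ * O₁₂
        = O₂₃ + (O₁₂₃ * O₁ + O₁ * O₁₂₃) + (O₂ * O₃ - O₃ * O₂))
    (h2 : O₂₃ * O₁₂ - O₁₂ * O₂₃
        = O₃₁ + (O₁₂₃ * O₂ + O₂ * O₁₂₃) + (O₃ * O₁ - O₁ * O₃))
    (h3 : O₃₁ * O₂₃ - O₂₃ * O₃₁
        = O₁₂ + (O₁₂₃ * O₃ + O₃ * O₁₂₃) + (O₁ * O₂ - O₂ * O₁))
    (hc1 : O₁₂₃ * O₁ = O₁ * O₁₂₃) (hc2 : O₁₂₃ * O₂ = O₂ * O₁₂₃)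
    (hc3 : O₁₂₃ * O₃ = O₃ * O₁₂₃) (hc12 : O₁₂₃ * O₁₂ = O₁₂ * O₁₂₃)
    (hc31 : O₁₂₃ * O₃₁ = O₃₁ * O₁₂₃) (hc23 : O₁₂₃ * O₂₃ = O₂₃ * O₁₂₃)
    (hsq : O₁₂₃ ^ 2 = -((1 / 4 : ℂ) • (1 : B)) + O₁ ^ 2 + O₂ ^ 2 + O₃ ^ 2
        + O₁₂ ^ 2 + O₃₁ ^ 2 + O₂₃ ^ 2) :
    let O₀ := -(Complex.I • O₁₂)
    let Op := Complex.I • O₃₁ + O₂₃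
    let Om := Complex.I • O₃₁ - O₂₃
    let T₀ := Complex.I • O₃
    let Tp := O₁ + Complex.I • O₂
    let Tm := O₁ - Complex.I • O₂
    (Op * Om = Tp * Tm - (O₀ - (1 / 2 : ℂ) • (1 : B)) ^ 2 - (O₁₂₃ + T₀) ^ 2) ∧
    (Om * Op = Tm * Tp - (O₀ + (1 / 2 : ℂ) • (1 : B)) ^ 2 - (O₁₂₃ - T₀) ^ 2) := by
  intro O₀ Op Om T₀ Tp Tm
  have h3' : O₃₁ * O₂₃ = O₁₂ + (O₁₂₃ * O₃ + O₃ * O₁₂₃) + (O₁ * O₂ - O₂ * O₁) + O₂₃ * O₃₁ :=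
    sub_eq_iff_eq_add.mp h3
  constructor
  · show (Complex.I • O₃₁ + O₂₃) * (Complex.I • O₃₁ - O₂₃)
      = (O₁ + Complex.I • O₂) * (O₁ - Complex.I • O₂)
        - (-(Complex.I • O₁₂) - (1 / 2 : ℂ) • (1 : B)) ^ 2 - (O₁₂₃ + Complex.I • O₃) ^ 2
    simp only [pow_two, mul_sub, sub_mul, mul_add, add_mul, mul_neg, neg_mul,
      smul_mul_assoc, mul_smul_comm, smul_smul, Complex.I_mul_I, neg_smul, one_smul,
      mul_one, one_mul]
    rw [h3', show O₁₂₃ * O₁₂₃ = _ from (pow_two O₁₂₃) ▸ hsq, hc3]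
    simp only [pow_two]
    match_scalars <;> simp [Complex.I_sq] <;> ring
  · show (Complex.I • O₃₁ - O₂₃) * (Complex.I • O₃₁ + O₂₃)
      = (O₁ - Complex.I • O₂) * (O₁ + Complex.I • O₂)
        - (-(Complex.I • O₁₂) + (1 / 2 : ℂ) • (1 : B)) ^ 2 - (O₁₂₃ - Complex.I • O₃) ^ 2
    simp only [pow_two, mul_sub, sub_mul, mul_add, add_mul, mul_neg, neg_mul,
      smul_mul_assoc, mul_smul_comm, smul_smul, Complex.I_mul_I, neg_smul, one_smul,
      mul_one, one_mul]
    rw [h3', show O₁₂₃ * O₁₂₃ = _ from (pow_two O₁₂₃) ▸ hsq, hc3]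
    simp only [pow_two]
    match_scalars <;> simp [Complex.I_sq] <;> ring
end

section
/- Let B be a unital associative ℂ-algebra with elements O₀, O₊, O₋, O₁₂₃, T₀, T₊, T₋ satisfying: (i) [O₀, O₊] = O₊ + {O₁₂₃, T₊} + [T₀, T₊], [O₀, O₋] = −O₋ + {O₁₂₃, T₋} − [T₀, T₋], [O₊, O₋] = 2O₀ − 2{O₁₂₃, T₀} + [T₊, T₋]; (ii) O₁₂₃ commutes with O₀, O₊, O₋, T₀, T₊, T₋; (iii) O₀T₀ = T₀O₀, O₀T₊ = −T₊O₀, O₀T₋ = −T₋O₀, T₀T₊ = −T₊T₀, T₀T₋ = −T₋T₀, T₊O₋ = −O₊T₋, T₋O₊ = −O₋T₊. Define L₊ := (1/2)(O₀O₊ + O₊O₀) and L₋ := (1/2)(O₀O₋ + O₋O₀). Then [O₀, L₊] = L₊ and [O₀, L₋] = −L₋; that is, L₊ and L₋ form a pair of ladder operators with respect to O₀. -/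
section
variable {B : Type*} [Ring B]

/-- If `A` commutes with `O` and `T` anticommutes with `O`, then `A*T` anticommutes with `O`. -/
private lemma anti_left (A O T : B) (hc : A * O = O * A) (ht : O * T = -(T * O)) :
    O * (A * T) = -((A * T) * O) := by
  rw [← mul_assoc, ← hc, mul_assoc, ht, mul_assoc]
  simp [mul_neg]

private lemma anti_right (A O T : B) (hc : A * O = O * A) (ht : O * T = -(T * O)) :
    O * (T * A) = -((T * A) * O) := by
  rw [← mul_assoc, ht, mul_assoc, hc, ← mul_assoc]
  simp [neg_mul]

/-- The key algebraic computation for a raising/lowering operator. -/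
private lemma key_calc (O P X ε : B)
    (h : O * P - P * O = ε + X) (hX : O * X = -(X * O)) :
    O * (O * P + P * O) - (O * P + P * O) * O = O * ε + ε * O := by
  have h' : O * P = ε + X + P * O := by
    rw [← h]; noncomm_ring
  calc O * (O * P + P * O) - (O * P + P * O) * O
      = O * (O * P) - (P * O) * O := by noncomm_ring
    _ = O * (ε + X + P * O) - (P * O) * O := by rw [h']
    _ = O * ε + O * X + (O * P) * O - (P * O) * O := by noncomm_ring
    _ = O * ε + O * X + (ε + X + P * O) * O - (P * O) * O := by rw [h']
    _ = O * ε + ε * O + (O * X + X * O) := by noncomm_ring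
    _ = O * ε + ε * O := by rw [hX]; abel

end

/-- First part of Proposition 3.9 of the paper, stated abstractly:
`L₊ = (1/2){O₀, O₊}` and `L₋ = (1/2){O₀, O₋}` form a pair of ladder operators
with respect to `O₀`. -/
theorem ladder_operators
    {B : Type*} [Ring B] [Algebra ℂ B]
    (O₀ Op Om O₁₂₃ T₀ Tp Tm : B)
    -- (i) commutation rules of Proposition 3.7
    (h1 : O₀ * Op - Op * O₀ = Op + (O₁₂₃ * Tp + Tp * O₁₂₃) + (T₀ * Tp - Tp * T₀))
    (h2 : O₀ * Om - Om * O₀ = -Om + (O₁₂₃ * Tm + Tm * O₁₂₃) - (T₀ * Tm - Tm * T₀))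
    (h3 : Op * Om - Om * Op = (2 : ℂ) • O₀ - (2 : ℂ) • (O₁₂₃ * T₀ + T₀ * O₁₂₃)
        + (Tp * Tm - Tm * Tp))
    -- (ii) centrality of O₁₂₃
    (hc0 : O₁₂₃ * O₀ = O₀ * O₁₂₃) (hcp : O₁₂₃ * Op = Op * O₁₂₃)
    (hcm : O₁₂₃ * Om = Om * O₁₂₃) (hct0 : O₁₂₃ * T₀ = T₀ * O₁₂₃)
    (hctp : O₁₂₃ * Tp = Tp * O₁₂₃) (hctm : O₁₂₃ * Tm = Tm * O₁₂₃)
    -- (iii) relations of Lemma 3.6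
    (r1 : O₀ * T₀ = T₀ * O₀) (r2 : O₀ * Tp = -(Tp * O₀)) (r3 : O₀ * Tm = -(Tm * O₀))
    (r4 : T₀ * Tp = -(Tp * T₀)) (r5 : T₀ * Tm = -(Tm * T₀))
    (r6 : Tp * Om = -(Op * Tm)) (r7 : Tm * Op = -(Om * Tp)) :
    let Lp := (1 / 2 : ℂ) • (O₀ * Op + Op * O₀)
    let Lm := (1 / 2 : ℂ) • (O₀ * Om + Om * O₀)
    (O₀ * Lp - Lp * O₀ = Lp) ∧ (O₀ * Lm - Lm * O₀ = -Lm) := by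
  intro Lp Lm
  -- anticommutation of the correction terms with O₀
  have a1 : O₀ * (O₁₂₃ * Tp) = -((O₁₂₃ * Tp) * O₀) := anti_left _ _ _ hc0 r2
  have a2 : O₀ * (Tp * O₁₂₃) = -((Tp * O₁₂₃) * O₀) := anti_right _ _ _ hc0 r2
  have a3 : O₀ * (T₀ * Tp) = -((T₀ * Tp) * O₀) := anti_left _ _ _ r1.symm r2
  have a4 : O₀ * (Tp * T₀) = -((Tp * T₀) * O₀) := anti_right _ _ _ r1.symm r2
  have b1 : O₀ * (O₁₂₃ * Tm) = -((O₁₂₃ * Tm) * O₀) := anti_left _ _ _ hc0 r3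
  have b2 : O₀ * (Tm * O₁₂₃) = -((Tm * O₁₂₃) * O₀) := anti_right _ _ _ hc0 r3
  have b3 : O₀ * (T₀ * Tm) = -((T₀ * Tm) * O₀) := anti_left _ _ _ r1.symm r3
  have b4 : O₀ * (Tm * T₀) = -((Tm * T₀) * O₀) := anti_right _ _ _ r1.symm r3
  constructor
  · set X := (O₁₂₃ * Tp + Tp * O₁₂₃) + (T₀ * Tp - Tp * T₀) with hXdef
    have hX : O₀ * X = -(X * O₀) := by
      rw [hXdef]
      simp only [mul_add, mul_sub, add_mul, sub_mul, a1, a2, a3, a4]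
      abel
    have h1' : O₀ * Op - Op * O₀ = Op + X := by rw [h1, hXdef]; abel
    have key := key_calc O₀ Op X Op h1' hX
    show O₀ * ((1 / 2 : ℂ) • (O₀ * Op + Op * O₀))
        - ((1 / 2 : ℂ) • (O₀ * Op + Op * O₀)) * O₀
        = (1 / 2 : ℂ) • (O₀ * Op + Op * O₀)
    rw [mul_smul_comm, smul_mul_assoc, ← smul_sub, key]
  · set X := (O₁₂₃ * Tm + Tm * O₁₂₃) - (T₀ * Tm - Tm * T₀) with hXdef
    have hX : O₀ * X = -(X * O₀) := by
      rw [hXdef]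
      simp only [mul_add, mul_sub, add_mul, sub_mul, b1, b2, b3, b4]
      abel
    have h2' : O₀ * Om - Om * O₀ = -Om + X := by rw [h2, hXdef]; abel
    have key := key_calc O₀ Om X (-Om) h2' hX
    show O₀ * ((1 / 2 : ℂ) • (O₀ * Om + Om * O₀))
        - ((1 / 2 : ℂ) • (O₀ * Om + Om * O₀)) * O₀
        = -((1 / 2 : ℂ) • (O₀ * Om + Om * O₀))
    rw [mul_smul_comm, smul_mul_assoc, ← smul_sub, key, ← smul_neg]
    congr 1
    noncomm_ring
end

section
/- Let B be a unital associative ℂ-algebra with elements O₀, O₊, O₋, O₁₂₃, T₀, T₊, T₋ satisfying: (i) [O₀, O₊] = O₊ + {O₁₂₃, T₊} + [T₀, T₊], [O₀, O₋] = −O₋ + {O₁₂₃, T₋} − [T₀, T₋], [O₊, O₋] = 2O₀ − 2{O₁₂₃, T₀} + [T₊, T₋]; (ii) O₁₂₃ commutes with O₀, O₊, O₋, T₀, T₊, T₋; (iii) O₀T₀ = T₀O₀, O₀T₊ = −T₊O₀, O₀T₋ = −T₋O₀, T₀T₊ = −T₊T₀, T₀T₋ = −T₋T₀, T₊O₋ =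 −O₊T₋, T₋O₊ = −O₋T₊. Then (O₊O₋)O₀ = O₀(O₊O₋) and (O₋O₊)O₀ = O₀(O₋O₊). -/
/-- Equation (3.26) in the proof of Proposition 3.9 of the paper, stated abstractly:
the products `O₊O₋` and `O₋O₊` commute with `O₀`. -/
theorem OpOm_commutes_with_O0
    {B : Type*} [Ring B] [Algebra ℂ B]
    (O₀ Op Om O₁₂₃ T₀ Tp Tm : B)
    -- (i) commutation rules of Proposition 3.7
    (h1 : O₀ * Op - Op * O₀ = Op + (O₁₂₃ * Tp + Tp * O₁₂₃) + (T₀ * Tp - Tp * T₀))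
    (h2 : O₀ * Om - Om * O₀ = -Om + (O₁₂₃ * Tm + Tm * O₁₂₃) - (T₀ * Tm - Tm * T₀))
    (h3 : Op * Om - Om * Op = (2 : ℂ) • O₀ - (2 : ℂ) • (O₁₂₃ * T₀ + T₀ * O₁₂₃)
        + (Tp * Tm - Tm * Tp))
    -- (ii) centrality of O₁₂₃
    (hc0 : O₁₂₃ * O₀ = O₀ * O₁₂₃) (hcp : O₁₂₃ * Op = Op * O₁₂₃)
    (hcm : O₁₂₃ * Om = Om * O₁₂₃) (hct0 : O₁₂₃ * T₀ = T₀ * O₁₂₃)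
    (hctp : O₁₂₃ * Tp = Tp * O₁₂₃) (hctm : O₁₂₃ * Tm = Tm * O₁₂₃)
    -- (iii) relations of Lemma 3.6
    (r1 : O₀ * T₀ = T₀ * O₀) (r2 : O₀ * Tp = -(Tp * O₀)) (r3 : O₀ * Tm = -(Tm * O₀))
    (r4 : T₀ * Tp = -(Tp * T₀)) (r5 : T₀ * Tm = -(Tm * T₀))
    (r6 : Tp * Om = -(Op * Tm)) (r7 : Tm * Op = -(Om * Tp)) :
    ((Op * Om) * O₀ = O₀ * (Op * Om)) ∧ ((Om * Op) * O₀ = O₀ * (Om * Op)) := by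
  simp only [two_smul] at h3
  have key : ∀ X Y : B, X + X = Y + Y → X = Y := by
    intro X Y hXY
    have h2 : (2:ℂ) • X = (2:ℂ) • Y := by rw [two_smul, two_smul]; exact hXY
    exact smul_right_injective B (by norm_num : (2:ℂ) ≠ 0) h2
  constructor
  · apply key
    linear_combination (norm := noncomm_ring)
      h1*O₀*Om +
      h1*Tm*O₁₂₃ +
      O₀*h1*Om -
      Om*h1*O₀ -
      O₁₂₃*h1*Tm -
      Tm*h1*O₁₂₃ -
      Om*O₀*h1 +
      O₁₂₃*Tm*h1 -
      h2*O₀*Op +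
      h2*Tp*O₁₂₃ -
      O₀*h2*Op +
      Op*h2*O₀ -
      O₁₂₃*h2*Tp -
      Tp*h2*O₁₂₃ +
      Op*O₀*h2 +
      O₁₂₃*Tp*h2 +
      h3*O₀ +
      h3*O₀*O₀ +
      h3*O₁₂₃*O₁₂₃ +
      h3*T₀*O₁₂₃ -
      O₀*h3 -
      2*(O₁₂₃*h3*O₁₂₃) -
      O₁₂₃*h3*T₀ -
      T₀*h3*O₁₂₃ -
      O₀*O₀*h3 +
      O₁₂₃*O₁₂₃*h3 +
      O₁₂₃*T₀*h3 -
      2*(hc0*O₁₂₃) -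
      2*(hc0*T₀) +
      hc0*Op*Tm +
      hc0*Om*Tp -
      Op*hc0*Tm -
      Om*hc0*Tp +
      2*(O₁₂₃*hc0) -
      2*(T₀*hc0) -
      4*(T₀*hc0*O₀) +
      Tp*hc0*Om -
      3*(Tm*hc0*Op) +
      2*(Op*Tm*hc0) -
      2*(Om*Tp*hc0) -
      4*(T₀*O₀*hc0) +
      Tp*Om*hc0 +
      Tm*Op*hc0 -
      hcp*Tm -
      hcp*O₀*Tm +
      2*(hcp*Om*O₁₂₃) +
      hcp*Om*T₀ -
      hcp*O₁₂₃*Om +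
      O₀*hcp*Tm -
      Om*hcp*O₁₂₃ -
      Om*hcp*T₀ -
      O₁₂₃*hcp*Om -
      T₀*hcp*Om +
      Tm*hcp +
      Tm*hcp*O₀ -
      2*(O₀*Tm*hcp) +
      O₁₂₃*Om*hcp +
      T₀*Om*hcp -
      3*(Tm*O₀*hcp) +
      hcm*Tp -
      hcm*O₀*Tp -
      hcm*Op*O₁₂₃ -
      hcm*Op*T₀ +
      O₀*hcm*Tp +
      Op*hcm*O₁₂₃ +
      Op*hcm*T₀ +
      O₁₂₃*hcm*Op +
      T₀*hcm*Op -
      Tp*hcm +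
      Tp*hcm*O₀ +
      2*(O₀*Tp*hcm) -
      Op*O₁₂₃*hcm -
      T₀*Op*hcm +
      Tp*O₀*hcm -
      2*(hct0*O₀*O₀) -
      hct0*Op*Om +
      hct0*Om*Op +
      2*(hct0*O₁₂₃*O₁₂₃) -
      2*(hct0*T₀*O₁₂₃) +
      2*(O₁₂₃*hct0*T₀) -
      2*(T₀*hct0*O₁₂₃) +
      2*(O₀*O₀*hct0) +
      Op*Om*hct0 -
      Om*Op*hct0 -
      2*(O₁₂₃*O₁₂₃*hct0) +
      2*(O₁₂₃*T₀*hct0) -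
      hctp*Om +
      hctp*Om*O₀ +
      O₀*hctp*Om +
      Om*hctp -
      Om*hctp*O₀ +
      2*(Tm*hctp*O₁₂₃) +
      O₀*Om*hctp -
      2*(Om*O₀*hctp) -
      4*(O₁₂₃*Tm*hctp) +
      2*(Tm*O₁₂₃*hctp) +
      hctm*Op -
      2*(hctm*O₀*Op) +
      hctm*Op*O₀ +
      2*(hctm*O₁₂₃*Tp) -
      O₀*hctm*Op -
      Op*hctm +
      Op*hctm*O₀ -
      2*(O₁₂₃*hctm*Tp) +
      O₀*Op*hctm +
      4*(r1*O₁₂₃) +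
      4*(r1*O₀*O₁₂₃) +
      r1*Tp*Om +
      r1*Tm*Op +
      4*(O₀*r1*O₁₂₃) -
      Op*r1*Tm -
      Om*r1*Tp +
      Tp*r1*Om +
      Tm*r1*Op -
      Op*Tm*r1 -
      Om*Tp*r1 -
      r2*Tm +
      2*(r2*Om*O₁₂₃) -
      r2*T₀*Om -
      r2*Tm*O₀ -
      O₀*r2*Tm -
      2*(Om*r2*O₁₂₃) +
      Om*r2*T₀ +
      T₀*r2*Om -
      Tm*r2 -
      Tm*r2*O₀ -
      Om*T₀*r2 +
      Tm*O₀*r2 +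
      r3*Tp -
      r3*O₀*Tp -
      2*(r3*Op*O₁₂₃) -
      r3*T₀*Op +
      O₀*r3*Tp +
      2*(Op*r3*O₁₂₃) +
      Op*r3*T₀ +
      T₀*r3*Op +
      Tp*r3 +
      Tp*r3*O₀ +
      O₀*Tp*r3 -
      Op*T₀*r3
  · apply key
    linear_combination (norm := noncomm_ring)
      h1*O₀*Om +
      h1*Tm*O₁₂₃ +
      O₀*h1*Om -
      Om*h1*O₀ -
      O₁₂₃*h1*Tm -
      Tm*h1*O₁₂₃ -
      Om*O₀*h1 +
      O₁₂₃*Tm*h1 -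
      h2*O₀*Op +
      h2*Tp*O₁₂₃ -
      O₀*h2*Op +
      Op*h2*O₀ -
      O₁₂₃*h2*Tp -
      Tp*h2*O₁₂₃ +
      Op*O₀*h2 +
      O₁₂₃*Tp*h2 -
      h3*O₀ +
      h3*O₀*O₀ +
      h3*O₁₂₃*O₁₂₃ +
      h3*T₀*O₁₂₃ +
      O₀*h3 -
      2*(O₁₂₃*h3*O₁₂₃) -
      O₁₂₃*h3*T₀ -
      T₀*h3*O₁₂₃ -
      O₀*O₀*h3 +
      O₁₂₃*O₁₂₃*h3 +
      O₁₂₃*T₀*h3 -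
      2*(hc0*O₁₂₃) -
      2*(hc0*T₀) +
      hc0*Op*Tm +
      hc0*Om*Tp -
      Op*hc0*Tm -
      Om*hc0*Tp +
      2*(O₁₂₃*hc0) +
      6*(T₀*hc0) -
      4*(T₀*hc0*O₀) +
      Tp*hc0*Om -
      3*(Tm*hc0*Op) +
      2*(Op*Tm*hc0) -
      2*(Om*Tp*hc0) -
      4*(T₀*O₀*hc0) +
      Tp*Om*hc0 +
      Tm*Op*hc0 -
      hcp*Tm -
      hcp*O₀*Tm +
      2*(hcp*Om*O₁₂₃) +
      hcp*Om*T₀ -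
      hcp*O₁₂₃*Om +
      O₀*hcp*Tm -
      Om*hcp*O₁₂₃ -
      Om*hcp*T₀ -
      O₁₂₃*hcp*Om -
      T₀*hcp*Om +
      Tm*hcp +
      Tm*hcp*O₀ -
      2*(O₀*Tm*hcp) +
      O₁₂₃*Om*hcp +
      T₀*Om*hcp -
      3*(Tm*O₀*hcp) +
      hcm*Tp -
      hcm*O₀*Tp -
      hcm*Op*O₁₂₃ -
      hcm*Op*T₀ +
      O₀*hcm*Tp +
      Op*hcm*O₁₂₃ +
      Op*hcm*T₀ +
      O₁₂₃*hcm*Op +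
      T₀*hcm*Op -
      Tp*hcm +
      Tp*hcm*O₀ +
      2*(O₀*Tp*hcm) -
      Op*O₁₂₃*hcm -
      T₀*Op*hcm +
      Tp*O₀*hcm +
      4*(hct0*O₀) -
      2*(hct0*O₀*O₀) -
      hct0*Op*Om +
      hct0*Om*Op +
      2*(hct0*O₁₂₃*O₁₂₃) -
      2*(hct0*T₀*O₁₂₃) -
      4*(O₀*hct0) +
      2*(O₁₂₃*hct0*T₀) -
      2*(T₀*hct0*O₁₂₃) +
      2*(O₀*O₀*hct0) +
      Op*Om*hct0 -
      Om*Op*hct0 -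
      2*(O₁₂₃*O₁₂₃*hct0) +
      2*(O₁₂₃*T₀*hct0) -
      hctp*Om +
      hctp*Om*O₀ +
      O₀*hctp*Om +
      Om*hctp -
      Om*hctp*O₀ +
      2*(Tm*hctp*O₁₂₃) +
      O₀*Om*hctp -
      2*(Om*O₀*hctp) -
      4*(O₁₂₃*Tm*hctp) +
      2*(Tm*O₁₂₃*hctp) +
      hctm*Op -
      2*(hctm*O₀*Op) +
      hctm*Op*O₀ +
      2*(hctm*O₁₂₃*Tp) -
      O₀*hctm*Op -
      Op*hctm +
      Op*hctm*O₀ -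
      2*(O₁₂₃*hctm*Tp) +
      O₀*Op*hctm -
      4*(r1*O₁₂₃) +
      4*(r1*O₀*O₁₂₃) +
      r1*Tp*Om +
      r1*Tm*Op +
      4*(O₀*r1*O₁₂₃) -
      Op*r1*Tm -
      Om*r1*Tp +
      Tp*r1*Om +
      Tm*r1*Op -
      Op*Tm*r1 -
      Om*Tp*r1 +
      r2*Tm +
      2*(r2*Om*O₁₂₃) -
      r2*T₀*Om -
      r2*Tm*O₀ -
      O₀*r2*Tm -
      2*(Om*r2*O₁₂₃) +
      Om*r2*T₀ +
      T₀*r2*Om +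
      Tm*r2 -
      Tm*r2*O₀ -
      Om*T₀*r2 +
      Tm*O₀*r2 -
      r3*Tp -
      r3*O₀*Tp -
      2*(r3*Op*O₁₂₃) -
      r3*T₀*Op +
      O₀*r3*Tp +
      2*(Op*r3*O₁₂₃) +
      Op*r3*T₀ +
      T₀*r3*Op -
      Tp*r3 +
      Tp*r3*O₀ +
      O₀*Tp*r3 -
      Op*T₀*r3
end

section
/- Let B be a unital associative ℂ-algebra with elements O₀, O₊, O₋, O₁₂₃, T₀, T₊, T₋ satisfying: (i) [O₀, O₊] = O₊ + {O₁₂₃, T₊} + [T₀, T₊], [O₀, O₋] = −O₋ + {O₁₂₃, T₋} − [T₀, T₋], [O₊, O₋] = 2O₀ − 2{O₁₂₃, T₀} + [T₊, T₋]; (ii) O₁₂₃ commutes with O₀, O₊, O₋, T₀, T₊, T₋; (iii) O₀T₀ = T₀O₀, O₀T₊ = −T₊O₀, O₀T₋ = −T₋O₀, T₀T₊ = −T₊T₀, T₀T₋ = −T₋T₀, T₊O₋ = −O₊T₋, T₋O₊ = −O₋T₊; (iv) O₊O₋ = T₊T₋ − (O₀ − 1/2)² − (O₁₂₃ + T₀)²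 and O₋O₊ = T₋T₊ − (O₀ + 1/2)² − (O₁₂₃ − T₀)². Define L₊ := (1/2)(O₀O₊ + O₊O₀) and L₋ := (1/2)(O₀O₋ + O₋O₀). Then L₊L₋ = −((O₀ − 1/2)² + (O₁₂₃ + T₀)²)·((O₀ − 1/2)² − T₊T₋) and L₋L₊ = −((O₀ + 1/2)² + (O₁₂₃ − T₀)²)·((O₀ + 1/2)² − T₋T₊). -/
/-- Second part of Proposition 3.9 of the paper, stated abstractly: the factorizations
of the products of the ladder operators `L₊ = (1/2){O₀, O₊}` and `L₋ = (1/2){O₀, O₋}`. -/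
theorem ladder_factorization
    {B : Type*} [Ring B] [Algebra ℂ B]
    (O₀ Op Om O₁₂₃ T₀ Tp Tm : B)
    -- (i) commutation rules of Proposition 3.7
    (h1 : O₀ * Op - Op * O₀ = Op + (O₁₂₃ * Tp + Tp * O₁₂₃) + (T₀ * Tp - Tp * T₀))
    (h2 : O₀ * Om - Om * O₀ = -Om + (O₁₂₃ * Tm + Tm * O₁₂₃) - (T₀ * Tm - Tm * T₀))
    (h3 : Op * Om - Om * Op = (2 : ℂ) • O₀ - (2 : ℂ) • (O₁₂₃ * T₀ + T₀ * O₁₂₃)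
        + (Tp * Tm - Tm * Tp))
    -- (ii) centrality of O₁₂₃
    (hc0 : O₁₂₃ * O₀ = O₀ * O₁₂₃) (hcp : O₁₂₃ * Op = Op * O₁₂₃)
    (hcm : O₁₂₃ * Om = Om * O₁₂₃) (hct0 : O₁₂₃ * T₀ = T₀ * O₁₂₃)
    (hctp : O₁₂₃ * Tp = Tp * O₁₂₃) (hctm : O₁₂₃ * Tm = Tm * O₁₂₃)
    -- (iii) relations of Lemma 3.6
    (r1 : O₀ * T₀ = T₀ * O₀) (r2 : O₀ * Tp = -(Tp * O₀)) (r3 : O₀ * Tm = -(Tm * O₀))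
    (r4 : T₀ * Tp = -(Tp * T₀)) (r5 : T₀ * Tm = -(Tm * T₀))
    (r6 : Tp * Om = -(Op * Tm)) (r7 : Tm * Op = -(Om * Tp))
    -- (iv) product formulas of Corollary 3.8
    (f1 : Op * Om = Tp * Tm - (O₀ - (1 / 2 : ℂ) • (1 : B)) ^ 2 - (O₁₂₃ + T₀) ^ 2)
    (f2 : Om * Op = Tm * Tp - (O₀ + (1 / 2 : ℂ) • (1 : B)) ^ 2 - (O₁₂₃ - T₀) ^ 2) :
    let Lp := (1 / 2 : ℂ) • (O₀ * Op + Op * O₀)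
    let Lm := (1 / 2 : ℂ) • (O₀ * Om + Om * O₀)
    (Lp * Lm = -(((O₀ - (1 / 2 : ℂ) • (1 : B)) ^ 2 + (O₁₂₃ + T₀) ^ 2)
        * ((O₀ - (1 / 2 : ℂ) • (1 : B)) ^ 2 - Tp * Tm))) ∧
    (Lm * Lp = -(((O₀ + (1 / 2 : ℂ) • (1 : B)) ^ 2 + (O₁₂₃ - T₀) ^ 2)
        * ((O₀ + (1 / 2 : ℂ) • (1 : B)) ^ 2 - Tm * Tp))) := by
  intro Lp Lm
  constructor
  · show (1 / 2 : ℂ) • (O₀ * Op + Op * O₀) * ((1 / 2 : ℂ) • (O₀ * Om + Om * O₀))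
        = -(((O₀ - (1 / 2 : ℂ) • (1 : B)) ^ 2 + (O₁₂₃ + T₀) ^ 2)
        * ((O₀ - (1 / 2 : ℂ) • (1 : B)) ^ 2 - Tp * Tm))
    linear_combination (norm := skip)
      (1/4 : ℂ) • (f1) +
      (-1/4 : ℂ) • (f1 * O₀) +
      (-3/4 : ℂ) • (O₀ * f1) +
      (1/2 : ℂ) • (O₀ * f1 * O₀) +
      (1/2 : ℂ) • (O₀ * O₀ * f1) +
      (-1/4 : ℂ) • (h1 * O₀ * Om) +
      (1/4 : ℂ) • (h1 * Om) +
      (-1/4 : ℂ) • (h1 * Om * O₀) +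
      (-1/2 : ℂ) • (O₀ * h1 * Om) +
      (1/2 : ℂ) • (O₁₂₃ * h1 * Tm) +
      (-1/2 : ℂ) • (Tp * T₀ * h2) +
      (1/2 : ℂ) • (hc0 * O₀ * O₁₂₃) +
      (1/1 : ℂ) • (hc0 * O₀ * T₀) +
      (-3/4 : ℂ) • (hc0 * O₁₂₃) +
      (1/2 : ℂ) • (hc0 * O₁₂₃ * O₀) +
      (-3/2 : ℂ) • (hc0 * T₀) +
      (1/1 : ℂ) • (hc0 * T₀ * O₀) +
      (1/1 : ℂ) • (hc0 * Tp * Om) +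
      (1/2 : ℂ) • (O₀ * hc0 * O₁₂₃) +
      (1/1 : ℂ) • (O₀ * hc0 * T₀) +
      (-3/4 : ℂ) • (O₁₂₃ * hc0) +
      (1/1 : ℂ) • (O₁₂₃ * hc0 * O₀) +
      (1/2 : ℂ) • (O₁₂₃ * O₀ * hc0) +
      (3/4 : ℂ) • (hct0 * O₀) +
      (-1/1 : ℂ) • (hct0 * O₀ * O₀) +
      (1/1 : ℂ) • (hct0 * Tp * Tm) +
      (-3/4 : ℂ) • (O₀ * hct0) +
      (1/2 : ℂ) • (O₀ * hct0 * O₀) +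
      (1/2 : ℂ) • (O₀ * O₀ * hct0) +
      (1/2 : ℂ) • (Tp * hct0 * Tm) +
      (-1/2 : ℂ) • (Tp * Tm * hct0) +
      (-1/2 : ℂ) • (Tp * hctm * T₀) +
      (1/4 : ℂ) • (hctp * O₀ * Om) +
      (-1/4 : ℂ) • (hctp * Om) +
      (1/4 : ℂ) • (hctp * Om * O₀) +
      (1/2 : ℂ) • (hctp * T₀ * Tm) +
      (-1/2 : ℂ) • (hctp * Tm * T₀) +
      (1/2 : ℂ) • (O₀ * hctp * Om) +
      (-1/2 : ℂ) • (O₁₂₃ * hctp * Tm) +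
      (3/4 : ℂ) • (r1 * T₀) +
      (-1/1 : ℂ) • (r1 * T₀ * O₀) +
      (-1/2 : ℂ) • (O₀ * r1 * T₀) +
      (-1/2 : ℂ) • (O₀ * T₀ * r1) +
      (3/2 : ℂ) • (O₁₂₃ * r1) +
      (-2/1 : ℂ) • (O₁₂₃ * r1 * O₀) +
      (-1/1 : ℂ) • (O₁₂₃ * O₀ * r1) +
      (3/4 : ℂ) • (T₀ * r1) +
      (-1/1 : ℂ) • (T₀ * r1 * O₀) +
      (-1/1 : ℂ) • (Tp * r1 * Om) +
      (1/1 : ℂ) • (r2 * T₀ * Om) +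
      (1/4 : ℂ) • (r2 * Tm) +
      (-1/2 : ℂ) • (O₀ * r2 * Tm) +
      (-1/2 : ℂ) • (O₁₂₃ * r2 * Om) +
      (1/2 : ℂ) • (O₀ * Tp * r3) +
      (1/2 : ℂ) • (O₁₂₃ * Op * r3) +
      (-1/4 : ℂ) • (Tp * r3) +
      (-1/4 : ℂ) • (r4 * O₀ * Om) +
      (1/4 : ℂ) • (r4 * Om) +
      (-1/4 : ℂ) • (r4 * Om * O₀) +
      (1/1 : ℂ) • (r4 * T₀ * Tm) +
      (-1/2 : ℂ) • (O₀ * r4 * Om) +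
      (-3/2 : ℂ) • (O₁₂₃ * r4 * Tm) +
      (-1/1 : ℂ) • (T₀ * r4 * Tm) +
      (1/2 : ℂ) • (O₁₂₃ * Tp * r5) +
      (-1/2 : ℂ) • (Tp * r5 * O₁₂₃) +
      (-1/2 : ℂ) • (Tp * T₀ * r5) +
      (1/2 : ℂ) • (O₁₂₃ * r6) +
      (-1/2 : ℂ) • (O₁₂₃ * r6 * O₀) +
      (-1/2 : ℂ) • (O₁₂₃ * O₀ * r6)
    simp only [mul_add, add_mul, mul_sub, sub_mul, neg_mul, mul_neg, mul_assoc,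
      smul_mul_assoc, mul_smul_comm, smul_smul, pow_succ, pow_zero, pow_one, one_mul, mul_one]
    module
  · show (1 / 2 : ℂ) • (O₀ * Om + Om * O₀) * ((1 / 2 : ℂ) • (O₀ * Op + Op * O₀))
        = -(((O₀ + (1 / 2 : ℂ) • (1 : B)) ^ 2 + (O₁₂₃ - T₀) ^ 2)
        * ((O₀ + (1 / 2 : ℂ) • (1 : B)) ^ 2 - Tm * Tp))
    linear_combination (norm := skip)
      (1/4 : ℂ) • (f2) +
      (1/4 : ℂ) • (f2 * O₀) +
      (3/4 : ℂ) • (O₀ * f2) +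
      (1/2 : ℂ) • (O₀ * f2 * O₀) +
      (1/2 : ℂ) • (O₀ * O₀ * f2) +
      (1/2 : ℂ) • (Tm * T₀ * h1) +
      (-1/4 : ℂ) • (h2 * O₀ * Op) +
      (-1/4 : ℂ) • (h2 * Op) +
      (-1/4 : ℂ) • (h2 * Op * O₀) +
      (-1/2 : ℂ) • (O₀ * h2 * Op) +
      (1/2 : ℂ) • (O₁₂₃ * h2 * Tp) +
      (1/2 : ℂ) • (hc0 * O₀ * O₁₂₃) +
      (-1/1 : ℂ) • (hc0 * O₀ * T₀) +
      (3/4 : ℂ) • (hc0 * O₁₂₃) +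
      (1/2 : ℂ) • (hc0 * O₁₂₃ * O₀) +
      (-3/2 : ℂ) • (hc0 * T₀) +
      (-1/1 : ℂ) • (hc0 * T₀ * O₀) +
      (1/1 : ℂ) • (hc0 * Tm * Op) +
      (1/2 : ℂ) • (O₀ * hc0 * O₁₂₃) +
      (-1/1 : ℂ) • (O₀ * hc0 * T₀) +
      (3/4 : ℂ) • (O₁₂₃ * hc0) +
      (1/1 : ℂ) • (O₁₂₃ * hc0 * O₀) +
      (1/2 : ℂ) • (O₁₂₃ * O₀ * hc0) +
      (3/4 : ℂ) • (hct0 * O₀) +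
      (1/1 : ℂ) • (hct0 * O₀ * O₀) +
      (-1/1 : ℂ) • (hct0 * Tm * Tp) +
      (-3/4 : ℂ) • (O₀ * hct0) +
      (-1/2 : ℂ) • (O₀ * hct0 * O₀) +
      (-1/2 : ℂ) • (O₀ * O₀ * hct0) +
      (-1/2 : ℂ) • (Tm * hct0 * Tp) +
      (1/2 : ℂ) • (Tm * Tp * hct0) +
      (1/4 : ℂ) • (hctm * O₀ * Op) +
      (1/4 : ℂ) • (hctm * Op) +
      (1/4 : ℂ) • (hctm * Op * O₀) +
      (-1/2 : ℂ) • (hctm * T₀ * Tp) +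
      (1/2 : ℂ) • (hctm * Tp * T₀) +
      (1/2 : ℂ) • (O₀ * hctm * Op) +
      (-1/2 : ℂ) • (O₁₂₃ * hctm * Tp) +
      (1/2 : ℂ) • (Tm * hctp * T₀) +
      (-3/4 : ℂ) • (r1 * T₀) +
      (-1/1 : ℂ) • (r1 * T₀ * O₀) +
      (-1/2 : ℂ) • (O₀ * r1 * T₀) +
      (-1/2 : ℂ) • (O₀ * T₀ * r1) +
      (3/2 : ℂ) • (O₁₂₃ * r1) +
      (2/1 : ℂ) • (O₁₂₃ * r1 * O₀) +
      (1/1 : ℂ) • (O₁₂₃ * O₀ * r1) +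
      (-3/4 : ℂ) • (T₀ * r1) +
      (-1/1 : ℂ) • (T₀ * r1 * O₀) +
      (1/1 : ℂ) • (Tm * r1 * Op) +
      (1/2 : ℂ) • (O₀ * Tm * r2) +
      (1/2 : ℂ) • (O₁₂₃ * Om * r2) +
      (1/4 : ℂ) • (Tm * r2) +
      (-1/1 : ℂ) • (r3 * T₀ * Op) +
      (-1/4 : ℂ) • (r3 * Tp) +
      (-1/2 : ℂ) • (O₀ * r3 * Tp) +
      (-1/2 : ℂ) • (O₁₂₃ * r3 * Op) +
      (-1/2 : ℂ) • (O₁₂₃ * Tm * r4) +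
      (1/2 : ℂ) • (Tm * r4 * O₁₂₃) +
      (-1/2 : ℂ) • (Tm * T₀ * r4) +
      (1/4 : ℂ) • (r5 * O₀ * Op) +
      (1/4 : ℂ) • (r5 * Op) +
      (1/4 : ℂ) • (r5 * Op * O₀) +
      (1/1 : ℂ) • (r5 * T₀ * Tp) +
      (1/2 : ℂ) • (O₀ * r5 * Op) +
      (3/2 : ℂ) • (O₁₂₃ * r5 * Tp) +
      (-1/1 : ℂ) • (T₀ * r5 * Tp) +
      (-1/2 : ℂ) • (O₁₂₃ * r7) +
      (-1/2 : ℂ) • (O₁₂₃ * r7 * O₀) +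
      (-1/2 : ℂ) • (O₁₂₃ * O₀ * r7)
    simp only [mul_add, add_mul, mul_sub, sub_mul, neg_mul, mul_neg, mul_assoc,
      smul_mul_assoc, mul_smul_comm, smul_smul, pow_succ, pow_zero, pow_one, one_mul, mul_one]
    module
end

section
/- Let m ≥ 2 be an integer, let Q be the quadratic form Q(x) = x₁² + x₂² + x₃² on ℝ³, and let ι : ℝ³ → CliffordAlgebra Q be the canonical embedding (so that ι(v)² = Q(v)·1 for all v). Set α₀ = (0, 0, 1) and α_j = (sin(jπ/m), −cos(jπ/m), 0) for 1 ≤ j ≤ m. Then ι(α₀)² = ι(α₁)² = ι(α_m)² = 1, (ι(α₀)ι(α₁))² = (ι(α₀)ι(α_m))² = −1, and (ι(α₁)ι(α_m))^m = (−1)^{m+1}. -/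
/-!
From `ι u * ι v + ι v * ι u = polar Q u v` one gets
`(ι u * ι v)² = polar Q u v • (ι u * ι v) - Q u * Q v`. For the unit vectors `α₁, α_m`
the polar form is `-2 cos (π / m)`, so `y = -(ι α₁ * ι α_m)` satisfies
`y² = 2 cos (π / m) • y - 1`: `y` behaves like a rotation by `φ = π / m`, with
`sin φ • yⁿ = sin (n φ) • y - sin ((n - 1) φ)`, and at `n = m` this gives `yᵐ = -1`.
-/

open Real CliffordAlgebra

namespace CliffordAlgebra

variable {R M : Type*} [CommRing R] [AddCommGroup M] [Module R M] {Q : QuadraticForm R M}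

theorem ι_sq_eq_one {v : M} (hv : Q v = 1) : ι Q v ^ 2 = 1 := by
  rw [sq, ι_sq_scalar, hv, map_one]

theorem ι_mul_ι_sq (u v : M) :
    (ι Q u * ι Q v) ^ 2 =
      QuadraticMap.polar Q u v • (ι Q u * ι Q v) - algebraMap R _ (Q u * Q v) := by
  rw [sq, ← mul_assoc, ι_mul_ι_mul_ι, map_sub, map_smul, map_smul, sub_mul, smul_mul_assoc,
    smul_mul_assoc, ι_sq_scalar, Algebra.smul_def (Q u), ← (algebraMap R _).map_mul]

theorem ι_mul_ι_sq_eq_neg_one {u v : M} (hu : Q u = 1) (hv : Q v = 1)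
    (huv : QuadraticMap.polar Q u v = 0) : (ι Q u * ι Q v) ^ 2 = -1 := by
  rw [ι_mul_ι_sq, huv, hu, hv, zero_smul, zero_sub, mul_one, map_one]

end CliffordAlgebra

section Chebyshev

variable {A : Type*} [Ring A] [Algebra ℝ A]

theorem sin_smul_pow_of_sq_eq {y : A} {φ : ℝ} (hy : y ^ 2 = (2 * cos φ) • y - 1) (n : ℕ) :
    sin φ • y ^ n = sin (n * φ) • y - sin ((n - 1) * φ) • 1 := by
  induction n with
  | zero => simp
  | succ n ih =>
    have hsin : sin ((n + 1 : ℕ) * φ) = 2 * cos φ * sin (n * φ) - sin ((n - 1) * φ) := by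
      push_cast
      rw [show ((n : ℝ) + 1) * φ = n * φ + φ by ring,
        show ((n : ℝ) - 1) * φ = n * φ - φ by ring, sin_add, sin_sub]
      ring
    calc sin φ • y ^ (n + 1) = (sin φ • y ^ n) * y := by rw [pow_succ, smul_mul_assoc]
      _ = sin (n * φ) • y ^ 2 - sin ((n - 1) * φ) • y := by
        rw [ih, sub_mul, smul_mul_assoc, smul_mul_assoc, one_mul, sq]
      _ = sin ((n + 1 : ℕ) * φ) • y - sin ((((n + 1 : ℕ) : ℝ) - 1) * φ) • 1 := by
        rw [hy, hsin, Nat.cast_succ, add_sub_cancel_right]; module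

theorem pow_eq_neg_one_of_sq_eq {y : A} {m : ℕ} (hm : 2 ≤ m)
    (hy : y ^ 2 = (2 * cos (π / m)) • y - 1) : y ^ m = -1 := by
  have hm0 : (m : ℝ) ≠ 0 := by positivity
  have hsin : sin (π / m) ≠ 0 := by
    refine (sin_pos_of_pos_of_lt_pi (by positivity) ?_).ne'
    exact div_lt_self pi_pos (by exact_mod_cast hm)
  have key := sin_smul_pow_of_sq_eq hy m
  rw [show (m : ℝ) * (π / m) = π by field_simp, sin_pi, zero_smul, zero_sub,
    show ((m : ℝ) - 1) * (π / m) = π - π / m by field_simp, sin_pi_sub, ← smul_neg] at key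
  exact smul_right_injective A hsin key

end Chebyshev

theorem polar_eq_of_forall_eq_sum_sq {Q : QuadraticForm ℝ (Fin 3 → ℝ)}
    (hQ : ∀ x : Fin 3 → ℝ, Q x = x 0 ^ 2 + x 1 ^ 2 + x 2 ^ 2) (u v : Fin 3 → ℝ) :
    QuadraticMap.polar Q u v = 2 * (u 0 * v 0 + u 1 * v 1 + u 2 * v 2) := by
  simp only [QuadraticMap.polar, hQ, Pi.add_apply]
  ring

/-- The Clifford-algebra relations satisfied by the images of the simple roots
`α₀ = (0,0,1)`, `α₁ = (sin(π/m), −cos(π/m), 0)` and `α_m = (sin(mπ/m), −cos(mπ/m), 0)`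
of the root system `A₁ ⊕ I₂(m)` under the canonical embedding into the Clifford
algebra of the standard quadratic form on ℝ³: they generate the positive double
covering of `ℤ₂ × D_{2m}` with central element realized as `−1`. -/
theorem clifford_double_cover_relations
    (m : ℕ) (hm : 2 ≤ m)
    (Q : QuadraticForm ℝ (Fin 3 → ℝ))
    (hQ : ∀ x : Fin 3 → ℝ, Q x = x 0 ^ 2 + x 1 ^ 2 + x 2 ^ 2) :
    let ι := CliffordAlgebra.ι Q
    let α₀ : Fin 3 → ℝ := ![0, 0, 1]
    let α : ℕ → Fin 3 → ℝ := fun j =>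
      ![Real.sin (j * Real.pi / m), -Real.cos (j * Real.pi / m), 0]
    (ι α₀) ^ 2 = 1 ∧ (ι (α 1)) ^ 2 = 1 ∧ (ι (α m)) ^ 2 = 1 ∧
    (ι α₀ * ι (α 1)) ^ 2 = -1 ∧ (ι α₀ * ι (α m)) ^ 2 = -1 ∧
    (ι (α 1) * ι (α m)) ^ m = (-1 : CliffordAlgebra Q) ^ (m + 1) := by
  intro ι α₀ α
  have hQα₀ : Q α₀ = 1 := by simp [hQ, α₀]
  have hQα (j : ℕ) : Q (α j) = 1 := by simp [hQ, α, sin_sq_add_cos_sq]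
  have hpolar₀ (j : ℕ) : QuadraticMap.polar Q α₀ (α j) = 0 := by
    simp [polar_eq_of_forall_eq_sum_sq hQ, α₀, α]
  have hpolar : QuadraticMap.polar Q (α 1) (α m) = -(2 * cos (π / m)) := by
    have hm0 : (m : ℝ) ≠ 0 := by positivity
    simp [polar_eq_of_forall_eq_sum_sq hQ, α, hm0]
  refine ⟨ι_sq_eq_one hQα₀, ι_sq_eq_one (hQα 1), ι_sq_eq_one (hQα m),
    ι_mul_ι_sq_eq_neg_one hQα₀ (hQα 1) (hpolar₀ 1),
    ι_mul_ι_sq_eq_neg_one hQα₀ (hQα m) (hpolar₀ m), ?_⟩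
  set y := -(ι (α 1) * ι (α m)) with hy_def
  have hy : y ^ 2 = (2 * cos (π / m)) • y - 1 := by
    rw [hy_def, neg_sq, CliffordAlgebra.ι_mul_ι_sq, hpolar, hQα, hQα, mul_one, map_one,
      neg_smul, smul_neg]
  calc (ι (α 1) * ι (α m)) ^ m = (-1) ^ m * y ^ m := by rw [← neg_pow, hy_def, neg_neg]
    _ = (-1) ^ (m + 1) := by rw [pow_eq_neg_one_of_sq_eq hm hy, pow_succ]
end
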